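/- arXiv:1203.1340 — 9 statements merged into one kernel-verified Lean document; each statement's English description precedes it below -/
import Mathlib

section
/- If u : X × Y → ℝ∪{±∞} is lower semi-continuous on Gr_X(Φ) and Φ : X → K(Y) is a compact-valued upper semi-continuous set-valued mapping, then u is K-inf-compact on Gr_X(Φ). -/
/-- The graph of an upper semicontinuous compact-valued multifunction over a
compact set is compact. -/
lemma graph_compact_of_usc {X Y : Type*}
    [TopologicalSpace X] [TopologicalSpace Y]
    (Φ : X → Set Y) (hcomp : ∀ x, IsCompact (Φ x))
    (husc : ∀ x : X, ∀ G : Set Y, IsOpen G → Φ x ⊆ G →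
      ∀ᶠ z in nhds x, Φ z ⊆ G)
    {K : Set X} (hK : IsCompact K) :
    IsCompact {p : X × Y | p.1 ∈ K ∧ p.2 ∈ Φ p.1} := by
  set S : Set (X × Y) := {p : X × Y | p.1 ∈ K ∧ p.2 ∈ Φ p.1} with hSdef
  rw [isCompact_iff_ultrafilter_le_nhds]
  intro F hF
  have hSF : S ∈ F := Filter.le_principal_iff.mp hF
  have hKF : K ∈ Ultrafilter.map Prod.fst F := by
    apply Filter.mem_map.mpr
    filter_upwards [hSF] with p hp using hp.1
  obtain ⟨x, hxK, hx⟩ := hK.ultrafilter_le_nhds (Ultrafilter.map Prod.fst F)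
    (Filter.le_principal_iff.mpr hKF)
  -- find a cluster point of snd-image in Φ x
  have hy : ∃ y ∈ Φ x, (Ultrafilter.map Prod.snd F : Filter Y) ≤ nhds y := by
    by_contra hcon
    push_neg at hcon
    -- for each y ∈ Φ x choose an open nbhd whose complement is in the ultrafilter
    have hU : ∀ y ∈ Φ x, ∃ U : Set Y, IsOpen U ∧ y ∈ U ∧
        Uᶜ ∈ Ultrafilter.map Prod.snd F := by
      intro y hyΦ
      have := hcon y hyΦ
      rw [Filter.le_def] at this
      push_neg at this
      obtain ⟨U, hU, hUF⟩ := this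
      obtain ⟨V, hVU, hVopen, hyV⟩ := mem_nhds_iff.mp hU
      refine ⟨V, hVopen, hyV, ?_⟩
      have hVnot : V ∉ Ultrafilter.map Prod.snd F := fun h => hUF (Filter.mem_of_superset h hVU)
      exact (Ultrafilter.compl_mem_iff_notMem).mpr hVnot
    choose U hUopen hUmem hUcompl using hU
    -- compactness: finite subcover
    obtain ⟨t, ht⟩ := (hcomp x).elim_nhds_subcover' (fun y hy => U y hy)
      (fun y hy => (hUopen y hy).mem_nhds (hUmem y hy))
    set G : Set Y := ⋃ y ∈ t, U y y.2 with hGdef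
    have hGopen : IsOpen G := isOpen_biUnion fun y _ => hUopen y y.2
    have hΦG : Φ x ⊆ G := ht
    -- the complement of G is in the ultrafilter
    have hGc : Gᶜ ∈ Ultrafilter.map Prod.snd F := by
      have hGc' : Gᶜ = ⋂ y ∈ t, (U ↑y y.2)ᶜ := by
        rw [hGdef]; simp [Set.compl_iUnion]
      rw [hGc', ← Ultrafilter.mem_coe, Filter.biInter_finset_mem]
      intro y hy
      exact hUcompl ↑y y.2
    -- but usc gives G itself in the ultrafilter
    have hV := husc x G hGopen hΦG
    have hVF : {z : X | Φ z ⊆ G} ∈ Ultrafilter.map Prod.fst F :=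
      hx (by exact hV)
    have hGmem : G ∈ Ultrafilter.map Prod.snd F := by
      apply Filter.mem_map.mpr
      have h1 : {p : X × Y | Φ p.1 ⊆ G} ∈ F := Filter.mem_map.mp hVF
      filter_upwards [hSF, h1] with p hp hp2 using hp2 hp.2
    exact (Ultrafilter.compl_mem_iff_notMem).mp hGc hGmem
  obtain ⟨y, hyΦ, hyle⟩ := hy
  refine ⟨(x, y), ⟨hxK, hyΦ⟩, ?_⟩
  rw [nhds_prod_eq, Filter.le_prod]
  exact ⟨hx, hyle⟩

/-- If u is lower semicontinuous on Gr_X(Φ) (level sets closed in the subspace Gr_X(Φ))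
    and Φ is an upper semicontinuous compact-valued multifunction, then u is
    K-inf-compact on Gr_X(Φ). -/
theorem lsc_usc_compactValued_implies_KInfCompact {X Y : Type*}
    [TopologicalSpace X] [TopologicalSpace Y] [T2Space X] [T2Space Y]
    (Φ : X → Set Y) (hne : ∀ x, (Φ x).Nonempty) (hcomp : ∀ x, IsCompact (Φ x))
    (husc : ∀ x : X, ∀ G : Set Y, IsOpen G → Φ x ⊆ G →
      ∀ᶠ z in nhds x, Φ z ⊆ G)
    (u : X × Y → EReal)
    (hlsc : ∀ lam : ℝ,
      IsClosed {p : {q : X × Y // q.2 ∈ Φ q.1} | u p.1 ≤ (lam : EReal)}) :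
    ∀ K : Set X, K.Nonempty → IsCompact K → ∀ lam : ℝ,
      IsCompact {p : X × Y | p.1 ∈ K ∧ p.2 ∈ Φ p.1 ∧ u p ≤ (lam : EReal)} := by
  intro K _ hK lam
  have hS := graph_compact_of_usc Φ hcomp husc hK
  obtain ⟨C, hCclosed, hCpre⟩ := isClosed_induced_iff.mp (hlsc lam)
  have heq : {p : X × Y | p.1 ∈ K ∧ p.2 ∈ Φ p.1 ∧ u p ≤ (lam : EReal)}
      = {p : X × Y | p.1 ∈ K ∧ p.2 ∈ Φ p.1} ∩ C := by
    ext p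
    constructor
    · rintro ⟨h1, h2, h3⟩
      refine ⟨⟨h1, h2⟩, ?_⟩
      have : (⟨p, h2⟩ : {q : X × Y // q.2 ∈ Φ q.1}) ∈ Subtype.val ⁻¹' C := by
        rw [hCpre]; exact h3
      exact this
    · rintro ⟨⟨h1, h2⟩, hC⟩
      refine ⟨h1, h2, ?_⟩
      have : (⟨p, h2⟩ : {q : X × Y // q.2 ∈ Φ q.1}) ∈ Subtype.val ⁻¹' C := hC
      rw [hCpre] at this
      exact this
  rw [heq]
  exact hS.inter_right hCclosed
end

section
/- Let X and Y be metrizable spaces. Then u is K-inf-compact on Gr_X(Φ) if and only if: (i) u is lower semi-continuous on Gr_X(Φ), and (ii) whenever a sequence x_n → x in X and y_n ∈ Φ(x_n) are such that the sequence u(x_n, y_n) is bounded above, the sequence (y_n) has a limit point y ∈ Φ(x). -/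
/-- For metrizable X and Y, u is K-inf-compact on Gr_X(Φ) iff
    (i) u is lower semicontinuous on Gr_X(Φ), and
    (ii) for every convergent sequence x_n → x and y_n ∈ Φ x_n with u (x_n, y_n)
    bounded above, the sequence (y_n) has a limit point y ∈ Φ x. -/
theorem KInfCompact_iff_metrizable {X Y : Type*}
    [TopologicalSpace X] [TopologicalSpace Y]
    [TopologicalSpace.MetrizableSpace X] [TopologicalSpace.MetrizableSpace Y]
    (Φ : X → Set Y) (hne : ∀ x, (Φ x).Nonempty)
    (u : X × Y → EReal) :
    (∀ K : Set X, K.Nonempty → IsCompact K → ∀ lam : ℝ,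
      IsCompact {p : X × Y | p.1 ∈ K ∧ p.2 ∈ Φ p.1 ∧ u p ≤ (lam : EReal)}) ↔
    ((∀ lam : ℝ, IsClosed {p : X × Y | p.2 ∈ Φ p.1 ∧ u p ≤ (lam : EReal)}) ∧
     (∀ (xs : ℕ → X) (x : X), Filter.Tendsto xs Filter.atTop (nhds x) →
       ∀ ys : ℕ → Y, (∀ n, ys n ∈ Φ (xs n)) →
       (∃ lam : ℝ, ∀ n, u (xs n, ys n) ≤ (lam : EReal)) →
       ∃ y ∈ Φ x, MapClusterPt y Filter.atTop ys)) := by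
  letI : MetricSpace X := TopologicalSpace.metrizableSpaceMetric X
  letI : MetricSpace Y := TopologicalSpace.metrizableSpaceMetric Y
  constructor
  · intro h
    constructor
    · intro lam
      apply IsSeqClosed.isClosed
      intro p q hp hq
      have hx1 : Filter.Tendsto (fun n => (p n).1) Filter.atTop (nhds q.1) :=
        (continuous_fst.tendsto q).comp hq
      have hK : IsCompact (insert q.1 (Set.range fun n => (p n).1)) :=
        hx1.isCompact_insert_range
      have hc := h _ ⟨q.1, Set.mem_insert _ _⟩ hK lam
      have hmem : ∀ n, p n ∈ {r : X × Y | r.1 ∈ insert q.1 (Set.range fun n => (p n).1) ∧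
          r.2 ∈ Φ r.1 ∧ u r ≤ (lam : EReal)} := fun n =>
        ⟨Set.mem_insert_iff.2 (Or.inr ⟨n, rfl⟩), (hp n).1, (hp n).2⟩
      have hqmem := hc.isClosed.mem_of_tendsto hq (Filter.Eventually.of_forall hmem)
      exact ⟨hqmem.2.1, hqmem.2.2⟩
    · rintro xs x hx ys hys ⟨lam, hlam⟩
      have hK : IsCompact (insert x (Set.range xs)) := hx.isCompact_insert_range
      have hc := h _ ⟨x, Set.mem_insert _ _⟩ hK lam
      obtain ⟨⟨a, b⟩, hab, φ, hφ, hten⟩ := hc.tendsto_subseq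
        (x := fun n => (xs n, ys n))
        (fun n => ⟨Set.mem_insert_iff.2 (Or.inr ⟨n, rfl⟩), hys n, hlam n⟩)
      have h1 : Filter.Tendsto (fun n => xs (φ n)) Filter.atTop (nhds a) :=
        (continuous_fst.tendsto _).comp hten
      have h2 : Filter.Tendsto (fun n => xs (φ n)) Filter.atTop (nhds x) :=
        hx.comp hφ.tendsto_atTop
      have hax : a = x := tendsto_nhds_unique h1 h2
      subst hax
      refine ⟨b, hab.2.1, ?_⟩
      have hb : Filter.Tendsto (fun n => ys (φ n)) Filter.atTop (nhds b) :=
        (continuous_snd.tendsto _).comp hten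
      exact MapClusterPt.of_comp hφ.tendsto_atTop hb.mapClusterPt
  · rintro ⟨hcl, hseq⟩ K _hKne hK lam
    apply IsSeqCompact.isCompact
    intro p hp
    obtain ⟨x, hxK, φ, hφ, hxt⟩ := hK.tendsto_subseq
      (x := fun n => (p n).1) (fun n => (hp n).1)
    obtain ⟨y, hyΦ, hycl⟩ := hseq (fun n => (p (φ n)).1) x hxt
      (fun n => (p (φ n)).2) (fun n => (hp (φ n)).2.1)
      ⟨lam, fun n => (hp (φ n)).2.2⟩
    obtain ⟨ψ, hψ, hyt⟩ := TopologicalSpace.FirstCountableTopology.tendsto_subseq hycl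
    refine ⟨(x, y), ⟨hxK, hyΦ, ?_⟩, φ ∘ ψ, hφ.comp hψ, ?_⟩
    · -- u (x, y) ≤ lam via closedness
      have ht : Filter.Tendsto (fun n => p (φ (ψ n))) Filter.atTop (nhds (x, y)) := by
        rw [nhds_prod_eq]
        refine Filter.Tendsto.prodMk ?_ ?_
        · exact (hxt.comp hψ.tendsto_atTop)
        · exact hyt
      have := (hcl lam).mem_of_tendsto ht (Filter.Eventually.of_forall fun n =>
        ⟨(hp (φ (ψ n))).2.1, (hp (φ (ψ n))).2.2⟩)
      exact this.2
    · have ht : Filter.Tendsto (fun n => p (φ (ψ n))) Filter.atTop (nhds (x, y)) := by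
        rw [nhds_prod_eq]
        exact Filter.Tendsto.prodMk (hxt.comp hψ.tendsto_atTop) hyt
      exact ht
end

section
/- If u is K-inf-compact on Gr_X(Φ), then for every x ∈ X with v(x) < +∞, the argmin set Φ*(x) = {y ∈ Φ(x) : u(x,y) = v(x)} is nonempty and compact, and for x with v(x) = +∞, Φ*(x) = Φ(x). -/
/-- If u is K-inf-compact on Gr_X(Φ), then for x with v x < +∞ the argmin set
    Φ*(x) is nonempty and compact, and for x with v x = +∞, Φ*(x) = Φ x. -/
theorem KInfCompact_argmin_properties {X Y : Type*}
    [TopologicalSpace X] [TopologicalSpace Y] [T2Space X] [T2Space Y]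
    (Φ : X → Set Y) (hne : ∀ x, (Φ x).Nonempty)
    (u : X × Y → EReal)
    (hK : ∀ K : Set X, K.Nonempty → IsCompact K → ∀ lam : ℝ,
      IsCompact {p : X × Y | p.1 ∈ K ∧ p.2 ∈ Φ p.1 ∧ u p ≤ (lam : EReal)})
    (v : X → EReal) (hv : ∀ x, v x = ⨅ y ∈ Φ x, u (x, y)) :
    (∀ x : X, v x < ⊤ →
      ({y ∈ Φ x | u (x, y) = v x}.Nonempty ∧ IsCompact {y ∈ Φ x | u (x, y) = v x})) ∧
    (∀ x : X, v x = ⊤ → {y ∈ Φ x | u (x, y) = v x} = Φ x) := by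
  have hvle : ∀ x, ∀ y ∈ Φ x, v x ≤ u (x, y) := by
    intro x y hy; rw [hv]; exact iInf₂_le y hy
  constructor
  · intro x hx
    set S : ℝ → Set Y := fun lam => {y | y ∈ Φ x ∧ u (x, y) ≤ (lam : EReal)} with hS
    have hScomp : ∀ lam : ℝ, IsCompact (S lam) := by
      intro lam
      have h := hK {x} ⟨x, rfl⟩ isCompact_singleton lam
      have himg : S lam = Prod.snd '' {p : X × Y | p.1 ∈ ({x} : Set X) ∧ p.2 ∈ Φ p.1 ∧ u p ≤ (lam : EReal)} := by
        ext y
        constructor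
        · rintro ⟨h1, h2⟩; exact ⟨(x, y), ⟨rfl, h1, h2⟩, rfl⟩
        · rintro ⟨⟨a, b⟩, ⟨ha, h1, h2⟩, rfl⟩
          simp only [Set.mem_singleton_iff] at ha; subst ha
          exact ⟨h1, h2⟩
      rw [himg]
      exact h.image continuous_snd
    have hSne : ∀ lam : ℝ, v x < (lam : EReal) → (S lam).Nonempty := by
      intro lam hlam
      by_contra hc
      rw [Set.not_nonempty_iff_eq_empty] at hc
      have hle : (lam : EReal) ≤ ⨅ y ∈ Φ x, u (x, y) := by
        refine le_iInf₂ fun y hy => ?_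
        by_contra hlt
        have hmem : y ∈ S lam := ⟨hy, (not_le.1 hlt).le⟩
        rw [hc] at hmem
        exact hmem
      rw [hv] at hlam
      exact absurd hlam (not_lt.2 hle)
    let I := {lam : ℝ // v x < (lam : EReal)}
    have hInhab : Nonempty I := by
      obtain ⟨r, hr, -⟩ := EReal.exists_between_coe_real hx
      exact ⟨⟨r, hr⟩⟩
    have hA : {y ∈ Φ x | u (x, y) = v x} = ⋂ i : I, S i.1 := by
      ext y
      simp only [Set.mem_setOf_eq, Set.mem_iInter]
      constructor
      · rintro ⟨hy, he⟩ i
        exact ⟨hy, (le_of_eq he).trans i.2.le⟩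
      · intro h
        obtain i0 := hInhab.some
        have hy : y ∈ Φ x := (h i0).1
        refine ⟨hy, le_antisymm ?_ (hvle x y hy)⟩
        by_contra hlt
        push_neg at hlt
        obtain ⟨r, hr1, hr2⟩ := EReal.exists_between_coe_real hlt
        exact absurd (h ⟨r, hr1⟩).2 (not_le.2 hr2)
    have hdir : Directed (· ⊇ ·) fun i : I => S i.1 := by
      intro i j
      rcases le_total i.1 j.1 with hij | hij
      · exact ⟨i, subset_rfl, fun y hy => ⟨hy.1, hy.2.trans (by exact_mod_cast hij)⟩⟩
      · exact ⟨j, fun y hy => ⟨hy.1, hy.2.trans (by exact_mod_cast hij)⟩, subset_rfl⟩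
    have hclosed : ∀ i : I, IsClosed (S i.1) := fun i => (hScomp i.1).isClosed
    have hnei : (⋂ i : I, S i.1).Nonempty :=
      IsCompact.nonempty_iInter_of_directed_nonempty_isCompact_isClosed _ hdir
        (fun i => hSne i.1 i.2) (fun i => hScomp i.1) hclosed
    obtain i0 := hInhab.some
    refine ⟨hA ▸ hnei, hA ▸ ?_⟩
    exact IsCompact.of_isClosed_subset (hScomp i0.1) (isClosed_iInter hclosed)
      (Set.iInter_subset _ i0)
  · intro x hx
    ext y
    simp only [Set.mem_setOf_eq]
    refine ⟨fun h => h.1, fun hy => ⟨hy, ?_⟩⟩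
    have := hvle x y hy
    rw [hx] at this ⊢
    exact top_le_iff.1 this
end

section
/- If u : X × Y → ℝ∪{±∞} is inf-compact on Gr_X(Φ), then the value function v(x) = inf_{y ∈ Φ(x)} u(x,y) is inf-compact on X, i.e., all level sets {x ∈ X : v(x) ≤ λ} are compact. -/
/-- If u is inf-compact on Gr_X(Φ), then the value function
    v(x) = inf_{y ∈ Φ x} u (x, y) is inf-compact on X. -/
theorem infCompact_value_function {X Y : Type*}
    [TopologicalSpace X] [TopologicalSpace Y] [T2Space X] [T2Space Y]
    (Φ : X → Set Y) (hne : ∀ x, (Φ x).Nonempty)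
    (u : X × Y → EReal)
    (hic : ∀ lam : ℝ,
      IsCompact {p : X × Y | p.2 ∈ Φ p.1 ∧ u p ≤ (lam : EReal)}) :
    ∀ lam : ℝ, IsCompact {x : X | (⨅ y ∈ Φ x, u (x, y)) ≤ (lam : EReal)} := by
  intro lam
  -- For each n, the projection of the (lam + 1/(n+1))-level set of u
  set A : ℕ → Set X := fun n =>
    Prod.fst '' {p : X × Y | p.2 ∈ Φ p.1 ∧ u p ≤ ((lam + 1 / (n + 1) : ℝ) : EReal)} with hA
  have hAc : ∀ n, IsCompact (A n) := fun n =>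
    (hic (lam + 1 / (n + 1))).image continuous_fst
  have hkey : {x : X | (⨅ y ∈ Φ x, u (x, y)) ≤ (lam : EReal)} = ⋂ n, A n := by
    ext x
    simp only [Set.mem_setOf_eq, Set.mem_iInter]
    constructor
    · intro hx n
      have hlt : (⨅ y ∈ Φ x, u (x, y)) < ((lam + 1 / (n + 1) : ℝ) : EReal) := by
        refine lt_of_le_of_lt hx ?_
        exact_mod_cast lt_add_of_pos_right lam (by positivity : (0:ℝ) < 1 / (n + 1))
      rw [iInf_lt_iff] at hlt
      obtain ⟨y, hy⟩ := hlt
      rw [iInf_lt_iff] at hy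
      obtain ⟨hyΦ, hy⟩ := hy
      exact ⟨(x, y), ⟨hyΦ, hy.le⟩, rfl⟩
    · intro hx
      -- v x ≤ lam + 1/(n+1) for all n, hence v x ≤ lam
      have hle : ∀ n : ℕ, (⨅ y ∈ Φ x, u (x, y)) ≤ ((lam + 1 / (n + 1) : ℝ) : EReal) := by
        intro n
        obtain ⟨⟨x', y⟩, ⟨hyΦ, hyu⟩, hpx⟩ := hx n
        cases hpx
        exact le_trans (iInf₂_le y hyΦ) hyu
      by_contra hcon
      push_neg at hcon
      obtain ⟨c, hc1, hc2⟩ := EReal.exists_between_coe_real hcon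
      obtain ⟨n, hn⟩ := exists_nat_one_div_lt (show (0:ℝ) < c - lam by
        exact sub_pos.2 (by exact_mod_cast hc1))
      refine absurd (hle n) (not_le.2 (lt_of_lt_of_le ?_ hc2.le))
      exact_mod_cast (by linarith : lam + 1 / (n + 1 : ℝ) < c)
  rw [hkey]
  exact (hAc 0).of_isClosed_subset
    (isClosed_iInter fun n => (hAc n).isClosed)
    (Set.iInter_subset A 0)
end

section
/- Let X and Y be Borel subsets of Polish spaces, Φ : X → 2^Y \ {∅}, and u K-inf-compact on Gr_X(Φ). Assume there exists at least one Borel selector of Φ. Then there exists a Borel measurable map f : X → Y with f(x) ∈ Φ(x) and u(x, f(x)) = v(x) = inf_{y ∈ Φ(x)} u(x,y) for all x ∈ X. -/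
open Metric Set Filter Topology TopologicalSpace

section Fsigma

variable {β : Type*} [MetricSpace β]

lemma open_eq_iUnion_closed (U : Set β) (hU : IsOpen U) :
    ∃ C : ℕ → Set β, (∀ n, IsClosed (C n)) ∧ U = ⋃ n, C n := by
  refine ⟨fun n => {y | ∀ z ∈ Uᶜ, 1/(n+1 : ℝ) ≤ dist y z}, fun n => ?_, ?_⟩
  · have h : {y | ∀ z ∈ Uᶜ, 1/(n+1:ℝ) ≤ dist y z}
        = ⋂ z ∈ Uᶜ, {y | 1/(n+1:ℝ) ≤ dist y z} := by
      ext y; simp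
    simp only [show (fun n : ℕ => {y | ∀ z ∈ Uᶜ, 1/(n+1:ℝ) ≤ dist y z}) n = {y | ∀ z ∈ Uᶜ, 1/(n+1:ℝ) ≤ dist y z} from rfl, h]
    exact isClosed_biInter fun z _ =>
      isClosed_le continuous_const (Continuous.dist continuous_id continuous_const)
  · ext y
    simp only [mem_iUnion, mem_setOf_eq]
    constructor
    · intro hy
      obtain ⟨r, hr, hball⟩ := Metric.isOpen_iff.1 hU y hy
      obtain ⟨n, hn⟩ := exists_nat_one_div_lt hr
      refine ⟨n, fun z hz => ?_⟩
      by_contra h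
      push_neg at h
      exact hz (hball (by rw [mem_ball, dist_comm]; exact h.trans hn))
    · rintro ⟨n, hn⟩
      by_contra hyU
      have := hn y hyU
      rw [dist_self] at this
      have : (0:ℝ) < 1/(n+1:ℝ) := by positivity
      linarith [hn y hyU, dist_self y]

end Fsigma

section KRN

variable {α : Type*} [MeasurableSpace α]
variable {β : Type*} [MetricSpace β] [SecondCountableTopology β]
  [MeasurableSpace β] [BorelSpace β]

/-- Kuratowski–Ryll-Nardzewski-type selection theorem for compact-valued,
weakly measurable multifunctions into a separable metric space. -/
theorem krn_selector (D : α → Set β) (hne : ∀ x, (D x).Nonempty)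
    (hcpt : ∀ x, IsCompact (D x))
    (hmeas : ∀ U : Set β, IsOpen U → MeasurableSet {x | (D x ∩ U).Nonempty}) :
    ∃ f : α → β, Measurable f ∧ ∀ x, f x ∈ D x := by
  classical
  rcases isEmpty_or_nonempty α with hα | hα
  · exact ⟨fun x => (IsEmpty.false x).elim, measurable_of_empty _,
      fun x => (IsEmpty.false x).elim⟩
  have hβ : Nonempty β := ⟨(hne (Classical.arbitrary α)).some⟩
  set e : ℕ → β := denseSeq β with he_def
  have he : DenseRange e := denseRange_denseSeq β
  set r : ℕ → ℝ := fun n => (1/2 : ℝ)^n with hr_def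
  have hrpos : ∀ n, 0 < r n := fun n => by positivity
  -- base step
  have hbase : ∀ x, ∃ k, (D x ∩ ball (e k) (r 0)).Nonempty := by
    intro x
    obtain ⟨y, hy⟩ := hne x
    obtain ⟨k, hk⟩ := he.exists_dist_lt y (hrpos 0)
    exact ⟨k, y, hy, by rwa [mem_ball]⟩
  -- totalized step predicate
  set Q : ℕ → ℕ → α → ℕ → Prop := fun n m x k =>
    (D x ∩ (ball (e k) (r (n+1)) ∩ ball (e m) (r n))).Nonempty ∨
      ¬ ∃ j, (D x ∩ (ball (e j) (r (n+1)) ∩ ball (e m) (r n))).Nonempty with hQ_def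
  have hQex : ∀ n m x, ∃ k, Q n m x k := by
    intro n m x
    by_cases h : ∃ j, (D x ∩ (ball (e j) (r (n+1)) ∩ ball (e m) (r n))).Nonempty
    · obtain ⟨j, hj⟩ := h; exact ⟨j, Or.inl hj⟩
    · exact ⟨0, Or.inr h⟩
  set G : ℕ → ℕ → α → ℕ := fun n m x => Nat.find (hQex n m x) with hG_def
  have hGmeas : ∀ n m, Measurable (G n m) := by
    intro n m
    apply measurable_find
    intro k
    have h1 : ∀ j : ℕ, MeasurableSet
        {x | (D x ∩ (ball (e j) (r (n+1)) ∩ ball (e m) (r n))).Nonempty} :=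
      fun j => hmeas _ (isOpen_ball.inter isOpen_ball)
    have h2 : {x | Q n m x k} =
        {x | (D x ∩ (ball (e k) (r (n+1)) ∩ ball (e m) (r n))).Nonempty} ∪
        (⋃ j, {x | (D x ∩ (ball (e j) (r (n+1)) ∩ ball (e m) (r n))).Nonempty})ᶜ := by
      ext x
      simp only [hQ_def, mem_setOf_eq, mem_union, mem_compl_iff, mem_iUnion]
    rw [h2]
    exact (h1 k).union (MeasurableSet.iUnion h1).compl
  -- the approximating sequence of indices
  set κ : ℕ → α → ℕ :=
    fun n => Nat.rec (fun x => Nat.find (hbase x)) (fun n κn x => G n (κn x) x) n with hκ_def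
  have hκ0 : ∀ x, κ 0 x = Nat.find (hbase x) := fun _ => rfl
  have hκs : ∀ n x, κ (n+1) x = G n (κ n x) x := fun _ _ => rfl
  have hκmeas : ∀ n, Measurable (κ n) := by
    intro n
    induction n with
    | zero =>
        exact measurable_find hbase fun k => hmeas _ isOpen_ball
    | succ n ih =>
        have h1 : Measurable fun p : α × ℕ => G n p.2 p.1 :=
          measurable_from_prod_countable_left fun m => hGmeas n m
        exact h1.comp (measurable_id.prodMk ih)
  -- the invariant
  have key : ∀ n x, (D x ∩ ball (e (κ n x)) (r n)).Nonempty →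
      (D x ∩ (ball (e (κ (n+1) x)) (r (n+1)) ∩ ball (e (κ n x)) (r n))).Nonempty := by
    intro n x h
    obtain ⟨y, hyD, hyb⟩ := h
    obtain ⟨k, hk⟩ := he.exists_dist_lt y (hrpos (n+1))
    have hex : ∃ j, (D x ∩ (ball (e j) (r (n+1)) ∩ ball (e (κ n x)) (r n))).Nonempty :=
      ⟨k, y, hyD, by rwa [mem_ball], hyb⟩
    have hQ := Nat.find_spec (hQex n (κ n x) x)
    rw [hκs n x]
    rcases hQ with h' | h'
    · exact h'
    · exact absurd hex h'
  have hInv : ∀ n x, (D x ∩ ball (e (κ n x)) (r n)).Nonempty := by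
    intro n
    induction n with
    | zero => exact fun x => Nat.find_spec (hbase x)
    | succ n ih =>
        intro x
        obtain ⟨y, hyD, hyb, _⟩ := key n x (ih x)
        exact ⟨y, hyD, hyb⟩
  have hstep : ∀ n x, dist (e (κ n x)) (e (κ (n+1) x)) ≤ 2 * r n := by
    intro n x
    obtain ⟨z, hzD, hzb1, hzb2⟩ := key n x (hInv n x)
    rw [mem_ball] at hzb1 hzb2
    have h1 : dist (e (κ n x)) (e (κ (n+1) x)) ≤ dist z (e (κ n x)) + dist z (e (κ (n+1) x)) :=
      dist_triangle_left _ _ _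
    have h2 : r (n+1) = r n / 2 := by
      simp only [hr_def, pow_succ]; ring
    linarith [hrpos n]
  -- convergence
  have hlim : ∀ x, ∃ a ∈ D x, Tendsto (fun n => e (κ n x)) atTop (𝓝 a) := by
    intro x
    have hc : CauchySeq (fun n => e (κ n x)) :=
      cauchySeq_of_le_geometric (1/2) 2 (by norm_num) (fun n => hstep n x)
    choose y hyD hyb using fun n => hInv n x
    obtain ⟨a, haD, ψ, hψ, hten⟩ := (hcpt x).tendsto_subseq hyD
    refine ⟨a, haD, tendsto_nhds_of_cauchySeq_of_subseq hc hψ.tendsto_atTop ?_⟩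
    have hr0 : Tendsto (fun j => r (ψ j)) atTop (𝓝 0) :=
      (tendsto_pow_atTop_nhds_zero_of_lt_one (by norm_num) (by norm_num)).comp hψ.tendsto_atTop
    have hd : Tendsto (fun j => dist (y (ψ j)) (e (κ (ψ j) x))) atTop (𝓝 0) :=
      squeeze_zero (fun j => dist_nonneg) (fun j => (mem_ball.1 (hyb (ψ j))).le) hr0
    exact Filter.Tendsto.congr_dist hten hd
  choose g hgD hgt using hlim
  refine ⟨g, ?_, hgD⟩
  exact measurable_of_tendsto_metrizable' atTop
    (fun n => (measurable_from_nat (f := e)).comp (hκmeas n))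
    (tendsto_pi_nhds.2 hgt)

end KRN

section InfCompact

variable {α : Type*} [MetricSpace α] {β : Type*} [MetricSpace β]
variable {Φ : α → Set β} {u : α × β → EReal}

/-- Compactness of sublevel sets in each fiber. -/
lemma slice_compact
    (hK : ∀ K : Set α, K.Nonempty → IsCompact K → ∀ lam : ℝ,
      IsCompact {p : α × β | p.1 ∈ K ∧ p.2 ∈ Φ p.1 ∧ u p ≤ (lam : EReal)})
    (x : α) (lam : ℝ) :
    IsCompact {y | y ∈ Φ x ∧ u (x, y) ≤ (lam : EReal)} := by
  have h := hK {x} (singleton_nonempty x) isCompact_singleton lam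
  have himg : Prod.snd '' {p : α × β | p.1 ∈ ({x} : Set α) ∧ p.2 ∈ Φ p.1 ∧ u p ≤ (lam : EReal)}
      = {y | y ∈ Φ x ∧ u (x, y) ≤ (lam : EReal)} := by
    ext y
    simp only [mem_image, mem_setOf_eq, mem_singleton_iff, Prod.exists]
    constructor
    · rintro ⟨a, b, ⟨rfl, h1, h2⟩, rfl⟩; exact ⟨h1, h2⟩
    · rintro ⟨h1, h2⟩; exact ⟨x, y, ⟨rfl, h1, h2⟩, rfl⟩
  rw [← himg]
  exact h.image continuous_snd

/-- Lower semicontinuity of the value function of the problem with an extra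
closed constraint. -/
lemma lsc_value
    (hK : ∀ K : Set α, K.Nonempty → IsCompact K → ∀ lam : ℝ,
      IsCompact {p : α × β | p.1 ∈ K ∧ p.2 ∈ Φ p.1 ∧ u p ≤ (lam : EReal)})
    (C : Set β) (hC : IsClosed C) :
    LowerSemicontinuous (fun x => ⨅ y ∈ Φ x ∩ C, u (x, y)) := by
  intro x b hb
  by_contra hcon
  rw [Filter.not_eventually] at hcon
  obtain ⟨μ, hbμ, hμw⟩ := EReal.lt_iff_exists_real_btwn.1 hb
  have hseq : ∀ n : ℕ, ∃ x', dist x' x < 1/(n+1 : ℝ) ∧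
      ¬ b < (⨅ y ∈ Φ x' ∩ C, u (x', y)) := by
    intro n
    obtain ⟨x', hx'b, hx'⟩ := ((Metric.nhds_basis_ball (x := x)).frequently_iff).1 hcon
      (i := 1/(n+1:ℝ)) (by positivity)
    exact ⟨x', mem_ball.1 hx'b, hx'⟩
  choose xs hxsd hxsb using hseq
  have hxs : Tendsto xs atTop (𝓝 x) := by
    rw [tendsto_iff_dist_tendsto_zero]
    exact squeeze_zero (fun n => dist_nonneg) (fun n => (hxsd n).le)
      tendsto_one_div_add_atTop_nhds_zero_nat
  have hyex : ∀ n, ∃ y, y ∈ Φ (xs n) ∧ y ∈ C ∧ u (xs n, y) ≤ (μ : EReal) := by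
    intro n
    have h1 : (⨅ y ∈ Φ (xs n) ∩ C, u (xs n, y)) < (μ : EReal) :=
      lt_of_le_of_lt (not_lt.1 (hxsb n)) hbμ
    rw [iInf_lt_iff] at h1
    obtain ⟨y, hy⟩ := h1
    rw [iInf_lt_iff] at hy
    obtain ⟨hyin, hy⟩ := hy
    exact ⟨y, hyin.1, hyin.2, hy.le⟩
  choose ys hys1 hys2 hys3 using hyex
  have hKcpt := hK (insert x (range xs)) ⟨x, mem_insert x _⟩ hxs.isCompact_insert_range μ
  have hS' : IsCompact ({p : α × β | p.1 ∈ insert x (range xs) ∧ p.2 ∈ Φ p.1 ∧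
      u p ≤ (μ : EReal)} ∩ (univ ×ˢ C)) :=
    hKcpt.inter_right (isClosed_univ.prod hC)
  have hmem : ∀ n, (xs n, ys n) ∈ ({p : α × β | p.1 ∈ insert x (range xs) ∧ p.2 ∈ Φ p.1 ∧
      u p ≤ (μ : EReal)} ∩ (univ ×ˢ C)) := fun n =>
    ⟨⟨mem_insert_iff.2 (Or.inr (mem_range_self n)), hys1 n, hys3 n⟩, trivial, hys2 n⟩
  obtain ⟨q, hq, ψ, hψ, hten⟩ := hS'.tendsto_subseq hmem
  obtain ⟨a, y⟩ := q
  have hq1 : a = x := by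
    have h1 : Tendsto (fun j => xs (ψ j)) atTop (𝓝 a) :=
      (continuous_fst.tendsto _).comp hten
    exact tendsto_nhds_unique h1 (hxs.comp hψ.tendsto_atTop)
  subst hq1
  obtain ⟨⟨_, hqΦ, hqu⟩, _, hqC⟩ := hq
  have hle : (⨅ y ∈ Φ a ∩ C, u (a, y)) ≤ u (a, y) := iInf₂_le y ⟨hqΦ, hqC⟩
  exact absurd (lt_of_le_of_lt (hle.trans hqu) hμw) (lt_irrefl _)

/-- The constrained infimum is attained whenever it is `< ⊤`. -/
lemma inf_attained
    (hK : ∀ K : Set α, K.Nonempty → IsCompact K → ∀ lam : ℝ,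
      IsCompact {p : α × β | p.1 ∈ K ∧ p.2 ∈ Φ p.1 ∧ u p ≤ (lam : EReal)})
    (C : Set β) (hC : IsClosed C) (x : α)
    (hw : (⨅ y ∈ Φ x ∩ C, u (x, y)) < ⊤) :
    ∃ y ∈ Φ x ∩ C, u (x, y) = ⨅ y ∈ Φ x ∩ C, u (x, y) := by
  set w := ⨅ y ∈ Φ x ∩ C, u (x, y) with hw_def
  obtain ⟨μ0, hμ0, _⟩ := EReal.lt_iff_exists_real_btwn.1 hw
  haveI hι : Nonempty {μ : ℝ // w < (μ : EReal)} := ⟨⟨μ0, hμ0⟩⟩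
  set S : {μ : ℝ // w < (μ:EReal)} → Set β :=
    fun μ => {y | y ∈ Φ x ∧ u (x, y) ≤ (μ.1 : EReal)} ∩ C with hS_def
  have hScpt : ∀ μ, IsCompact (S μ) := fun μ => (slice_compact hK x μ.1).inter_right hC
  have hSne : ∀ μ, (S μ).Nonempty := by
    rintro ⟨μ, hμ⟩
    have h1 : w < (μ:EReal) := hμ
    rw [hw_def, iInf_lt_iff] at h1
    obtain ⟨y, h1⟩ := h1
    rw [iInf_lt_iff] at h1
    obtain ⟨hyin, h1⟩ := h1
    exact ⟨y, ⟨hyin.1, h1.le⟩, hyin.2⟩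
  have hdir : Directed (· ⊇ ·) S := by
    intro μ ν
    rcases le_total μ.1 ν.1 with h | h
    · exact ⟨μ, subset_rfl,
        fun y hy => ⟨⟨hy.1.1, hy.1.2.trans (EReal.coe_le_coe_iff.2 h)⟩, hy.2⟩⟩
    · exact ⟨ν,
        fun y hy => ⟨⟨hy.1.1, hy.1.2.trans (EReal.coe_le_coe_iff.2 h)⟩, hy.2⟩, subset_rfl⟩
  obtain ⟨y, hy⟩ := IsCompact.nonempty_iInter_of_directed_nonempty_isCompact_isClosed
    S hdir hSne hScpt (fun μ => (hScpt μ).isClosed)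
  have hy0 := mem_iInter.1 hy ⟨μ0, hμ0⟩
  have hyΦ : y ∈ Φ x := hy0.1.1
  have hyC : y ∈ C := hy0.2
  have hyu : u (x, y) ≤ w := by
    refine EReal.le_of_forall_lt_iff_le.1 fun z hz => ?_
    exact (mem_iInter.1 hy ⟨z, hz⟩).1.2
  exact ⟨y, ⟨hyΦ, hyC⟩, le_antisymm hyu (iInf₂_le y ⟨hyΦ, hyC⟩)⟩

/-- The argmin set is compact when the value is `< ⊤`. -/
lemma argmin_compact
    (hK : ∀ K : Set α, K.Nonempty → IsCompact K → ∀ lam : ℝ,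
      IsCompact {p : α × β | p.1 ∈ K ∧ p.2 ∈ Φ p.1 ∧ u p ≤ (lam : EReal)})
    (x : α) {v : EReal} (hv : v < ⊤) :
    IsCompact {y | y ∈ Φ x ∧ u (x, y) ≤ v} := by
  obtain ⟨μ0, hμ0, _⟩ := EReal.lt_iff_exists_real_btwn.1 hv
  have hvμ0 : v < (μ0 : EReal) := hμ0
  have heq : {y | y ∈ Φ x ∧ u (x,y) ≤ v}
      = ⋂ (μ : {μ : ℝ // v < (μ:EReal)}), {y | y ∈ Φ x ∧ u (x,y) ≤ (μ.1:EReal)} := by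
    ext y
    simp only [mem_setOf_eq, mem_iInter]
    constructor
    · rintro ⟨h1, h2⟩ μ; exact ⟨h1, h2.trans μ.2.le⟩
    · intro h
      exact ⟨(h ⟨μ0, hvμ0⟩).1, EReal.le_of_forall_lt_iff_le.1 fun z hz => (h ⟨z, hz⟩).2⟩
  rw [heq]
  exact IsCompact.of_isClosed_subset (slice_compact hK x μ0)
    (isClosed_iInter fun μ => (slice_compact hK x μ.1).isClosed)
    (iInter_subset (fun μ : {μ : ℝ // v < (μ:EReal)} => {y | y ∈ Φ x ∧ u (x,y) ≤ (μ.1:EReal)}) ⟨μ0, hvμ0⟩)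

end InfCompact

/-- Measurable selection: X and Y are Borel subsets of Polish spaces, u is
    K-inf-compact on Gr_X(Φ), and Φ admits at least one Borel selector. Then
    there is a Borel selector f of Φ with u (x, f x) = v x for all x. -/
theorem KInfCompact_measurable_selector
    {X' Y' : Type*} [MetricSpace X'] [PolishSpace X'] [MetricSpace Y'] [PolishSpace Y']
    [MeasurableSpace X'] [BorelSpace X'] [MeasurableSpace Y'] [BorelSpace Y']
    (A : Set X') (hA : MeasurableSet A) (B : Set Y') (hB : MeasurableSet B)
    (Φ : A → Set B) (hne : ∀ x, (Φ x).Nonempty)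
    (u : A × B → EReal)
    (hK : ∀ K : Set A, K.Nonempty → IsCompact K → ∀ lam : ℝ,
      IsCompact {p : A × B | p.1 ∈ K ∧ p.2 ∈ Φ p.1 ∧ u p ≤ (lam : EReal)})
    (hsel : ∃ φ : A → B, Measurable φ ∧ ∀ x, φ x ∈ Φ x) :
    ∃ f : A → B, Measurable f ∧ ∀ x : A,
      f x ∈ Φ x ∧ u (x, f x) = ⨅ y ∈ Φ x, u (x, y) := by
  classical
  obtain ⟨φ, hφm, hφΦ⟩ := hsel
  set v : A → EReal := fun x => ⨅ y ∈ Φ x, u (x, y) with hv_def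
  have hw_meas : ∀ C : Set B, IsClosed C →
      Measurable (fun x => ⨅ y ∈ Φ x ∩ C, u (x, y)) :=
    fun C hC => (lsc_value hK C hC).measurable
  have hv_meas : Measurable v := by
    have h := hw_meas univ isClosed_univ
    simpa only [Set.inter_univ] using h
  have hatt : ∀ x, v x < ⊤ → ∃ y ∈ Φ x, u (x, y) = v x := by
    intro x hx
    have h := inf_attained hK Set.univ isClosed_univ x
    simp only [Set.inter_univ] at h
    exact h hx
  set D : A → Set B :=
    fun x => if v x = ⊤ then {φ x} else {y | y ∈ Φ x ∧ u (x, y) ≤ v x} with hD_def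
  have hDne : ∀ x, (D x).Nonempty := by
    intro x
    by_cases hx : v x = ⊤
    · simp [hD_def, hx]
    · obtain ⟨y, hyΦ, hyu⟩ := hatt x (lt_top_iff_ne_top.2 hx)
      rw [hD_def]
      simp only [if_neg hx]
      exact ⟨y, hyΦ, hyu.le⟩
  have hDcpt : ∀ x, IsCompact (D x) := by
    intro x
    by_cases hx : v x = ⊤
    · simp [hD_def, hx]
    · rw [hD_def]
      simp only [if_neg hx]
      exact argmin_compact hK x (lt_top_iff_ne_top.2 hx)
  have hclosed : ∀ C : Set B, IsClosed C → MeasurableSet {x | (D x ∩ C).Nonempty} := by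
    intro C hC
    have hset : {x | (D x ∩ C).Nonempty} =
        ({x | v x = ⊤} ∩ φ ⁻¹' C) ∪
        ({x | v x = ⊤}ᶜ ∩ {x | (⨅ y ∈ Φ x ∩ C, u (x, y)) ≤ v x}) := by
      ext x
      by_cases hx : v x = ⊤
      · simp [hD_def, hx, Set.singleton_inter_nonempty]
      · simp only [hD_def, if_neg hx, Set.mem_setOf_eq, Set.mem_union, Set.mem_inter_iff,
          Set.mem_compl_iff, Set.mem_preimage, hx, false_and, false_or, not_false_iff,
          true_and]
        constructor
        · rintro ⟨y, ⟨hyΦ, hyu⟩, hyC⟩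
          exact (iInf₂_le y ⟨hyΦ, hyC⟩).trans hyu
        · intro hle
          have hwlt : (⨅ y ∈ Φ x ∩ C, u (x, y)) < ⊤ :=
            lt_of_le_of_lt hle (lt_top_iff_ne_top.2 hx)
          obtain ⟨y, ⟨hyΦ, hyC⟩, hequ⟩ := inf_attained hK C hC x hwlt
          exact ⟨y, ⟨hyΦ, hequ ▸ hle⟩, hyC⟩
    rw [hset]
    have h1 : MeasurableSet {x | v x = ⊤} := hv_meas (measurableSet_singleton ⊤)
    exact (h1.inter (hφm hC.measurableSet)).union
      (h1.compl.inter (measurableSet_le (hw_meas C hC) hv_meas))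
  have hopen : ∀ U : Set B, IsOpen U → MeasurableSet {x | (D x ∩ U).Nonempty} := by
    intro U hU
    obtain ⟨C, hCcl, hCU⟩ := open_eq_iUnion_closed U hU
    have hset : {x | (D x ∩ U).Nonempty} = ⋃ n, {x | (D x ∩ C n).Nonempty} := by
      ext x
      simp only [hCU, Set.inter_iUnion, Set.nonempty_iUnion, Set.mem_setOf_eq,
        Set.mem_iUnion]
    rw [hset]
    exact MeasurableSet.iUnion fun n => hclosed (C n) (hCcl n)
  obtain ⟨f, hfm, hfD⟩ := krn_selector D hDne hDcpt hopen
  refine ⟨f, hfm, fun x => ?_⟩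
  by_cases hx : v x = ⊤
  · have hfx : f x = φ x := by
      have h := hfD x
      rw [hD_def] at h
      simp only [if_pos hx] at h
      exact h
    have hxall : ∀ y, ∀ _ : y ∈ Φ x, u (x, y) = ⊤ := by
      have h := hx
      rw [hv_def] at h
      simp only [iInf_eq_top] at h
      exact h
    constructor
    · rw [hfx]; exact hφΦ x
    · rw [hxall (f x) (by rw [hfx]; exact hφΦ x)]
      exact hx.symm
  · have h := hfD x
    rw [hD_def] at h
    simp only [if_neg hx, Set.mem_setOf_eq] at h
    exact ⟨h.1, le_antisymm h.2 (iInf₂_le (f x) h.1)⟩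
end

section
/- Let X = [0,∞), Y = ℝ, Φ(x) = (-∞, x], and u(x,y) = |min{x, y+1}|. Then: (a) u is continuous on X × Y; (b) u is K-inf-compact on Gr_X(Φ); (c) u is not inf-compact on Gr_X(Φ); (d) v(x) = inf_{y ∈ Φ(x)} u(x,y) = 0 for all x; (e) Φ*(0) = [-1,0] and Φ*(x) = {-1} for x > 0, and the multifunction Φ* is not lower semi-continuous at 0. -/
/-- Example: X = [0,∞), Y = ℝ, Φ(x) = (-∞, x], u(x,y) = |min{x, y+1}|.
    (a) u is continuous; (b) u is K-inf-compact on Gr_X(Φ); (c) u is not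
    inf-compact on Gr_X(Φ); (d) v ≡ 0; (e) Φ*(0) = [-1,0], Φ*(x) = {-1} for
    x > 0, and Φ* is not lower semicontinuous at 0. -/
theorem example_KInfCompact_not_infCompact :
    let X := {x : ℝ // 0 ≤ x}
    let Φ : X → Set ℝ := fun x => Set.Iic x.1
    let u : X × ℝ → ℝ := fun p => |min p.1.1 (p.2 + 1)|
    let v : X → ℝ := fun x => sInf ((fun y => u (x, y)) '' Φ x)
    let Φs : X → Set ℝ := fun x => {y ∈ Φ x | u (x, y) = v x}
    -- (a)
    Continuous u ∧
    -- (b)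
    (∀ K : Set X, K.Nonempty → IsCompact K → ∀ lam : ℝ,
      IsCompact {p : X × ℝ | p.1 ∈ K ∧ p.2 ∈ Φ p.1 ∧ u p ≤ lam}) ∧
    -- (c)
    ¬ (∀ lam : ℝ, IsCompact {p : X × ℝ | p.2 ∈ Φ p.1 ∧ u p ≤ lam}) ∧
    -- (d)
    (∀ x : X, v x = 0) ∧
    -- (e)
    (∀ x : X, x.1 = 0 → Φs x = Set.Icc (-1 : ℝ) 0) ∧
    (∀ x : X, 0 < x.1 → Φs x = {(-1 : ℝ)}) ∧
    ¬ (∀ G : Set ℝ, IsOpen G → (Φs ⟨0, le_refl 0⟩ ∩ G).Nonempty →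
        ∀ᶠ z in nhds (⟨0, le_refl 0⟩ : X), (Φs z ∩ G).Nonempty) := by
  intro X Φ u v Φs
  have hu_cont : Continuous u :=
    ((continuous_subtype_val.comp continuous_fst).min
      (continuous_snd.add continuous_const)).abs
  have hv : ∀ x : X, v x = 0 := by
    intro x
    have hm : (-1 : ℝ) ∈ Φ x := le_trans (by norm_num) x.2
    have h0 : u (x, -1) = 0 := by
      show |min x.1 (-1 + 1)| = 0
      rw [neg_add_cancel, min_eq_right x.2, abs_zero]
    apply le_antisymm
    · apply csInf_le
      · exact ⟨0, by rintro t ⟨y, hy, rfl⟩; exact abs_nonneg _⟩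
      · exact ⟨-1, hm, h0⟩
    · refine le_csInf ⟨u (x, -1), ⟨-1, hm, rfl⟩⟩ ?_
      rintro t ⟨y, hy, rfl⟩; exact abs_nonneg _
  have hΦs0 : ∀ x : X, x.1 = 0 → Φs x = Set.Icc (-1 : ℝ) 0 := by
    intro x hx
    ext y
    simp only [Φs, Φ, u, hv, Set.mem_setOf_eq, Set.mem_Iic, Set.mem_Icc, hx,
      abs_eq_zero, Set.mem_sep_iff]
    rw [min_eq_left_iff]
    constructor
    · rintro ⟨h1, h2⟩; exact ⟨by linarith, h1⟩
    · rintro ⟨h1, h2⟩; exact ⟨h2, by linarith⟩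
  have hΦspos : ∀ x : X, 0 < x.1 → Φs x = {(-1 : ℝ)} := by
    intro x hx
    ext y
    simp only [Φs, Φ, u, hv, Set.mem_setOf_eq, Set.mem_Iic, Set.mem_singleton_iff,
      abs_eq_zero, Set.mem_sep_iff]
    constructor
    · rintro ⟨h1, h2⟩
      rcases min_cases x.1 (y + 1) with ⟨he, hle⟩ | ⟨he, hle⟩ <;> rw [he] at h2 <;> linarith
    · rintro rfl
      refine ⟨by linarith, ?_⟩
      rw [neg_add_cancel, min_eq_right x.2]
  refine ⟨hu_cont, ?_, ?_, hv, hΦs0, hΦspos, ?_⟩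
  · -- (b)
    intro K _ hK lam
    obtain ⟨M, hM⟩ := (hK.image continuous_subtype_val).bddAbove
    have hcl : IsClosed {p : X × ℝ | p.1 ∈ K ∧ p.2 ∈ Φ p.1 ∧ u p ≤ lam} :=
      (hK.isClosed.preimage continuous_fst).inter
        ((isClosed_le continuous_snd (continuous_subtype_val.comp continuous_fst)).inter
          (isClosed_le hu_cont continuous_const))
    have hsub : {p : X × ℝ | p.1 ∈ K ∧ p.2 ∈ Φ p.1 ∧ u p ≤ lam} ⊆
        K ×ˢ Set.Icc (-1 - |lam|) M := by
      rintro ⟨x, y⟩ ⟨hxK, hyx, hul⟩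
      refine ⟨hxK, ?_, le_trans hyx (hM ⟨x, hxK, rfl⟩)⟩
      rcases le_or_gt x.1 (y + 1) with h | h
      · have := x.2; have := abs_nonneg lam
        show -1 - |lam| ≤ y
        linarith
      · have he : u (x, y) = |y + 1| := by
          show |min x.1 (y + 1)| = |y + 1|
          rw [min_eq_right h.le]
        rw [he] at hul
        have := neg_abs_le (y + 1)
        have := le_abs_self lam
        show -1 - |lam| ≤ y
        linarith
    exact (hK.prod isCompact_Icc).of_isClosed_subset hcl hsub
  · -- (c)
    intro h
    obtain ⟨M, hM⟩ := ((h 0).image (continuous_subtype_val.comp continuous_fst)).bddAbove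
    have hx : (0 : ℝ) ≤ max M 0 + 1 := by positivity
    have hmem : ((⟨max M 0 + 1, hx⟩ : X), (-1 : ℝ)) ∈
        {p : X × ℝ | p.2 ∈ Φ p.1 ∧ u p ≤ 0} := by
      constructor
      · show (-1 : ℝ) ≤ max M 0 + 1; linarith [le_max_right M 0]
      · show |min (max M 0 + 1) (-1 + 1)| ≤ 0
        rw [neg_add_cancel, min_eq_right hx, abs_zero]
    have := hM ⟨_, hmem, rfl⟩
    have h2 : max M 0 + 1 ≤ M := this
    linarith [le_max_left M 0]
  · -- (e), lsc
    intro h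
    have hne : (Φs ⟨0, le_refl 0⟩ ∩ Set.Ioo (-(1:ℝ)/2) (1/2)).Nonempty := by
      refine ⟨0, ?_, by norm_num⟩
      rw [hΦs0 ⟨0, le_refl 0⟩ rfl]
      norm_num
    have hev := h _ isOpen_Ioo hne
    have htend : Filter.Tendsto (fun n : ℕ => (⟨1 / (n + 1), by positivity⟩ : X))
        Filter.atTop (nhds ⟨0, le_refl 0⟩) := by
      rw [tendsto_subtype_rng]
      simpa [one_div] using tendsto_one_div_add_atTop_nhds_zero_nat (𝕜 := ℝ)
    obtain ⟨n, hn⟩ := (htend.eventually hev).exists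
    rw [hΦspos _ (by positivity : (0:ℝ) < 1 / (n + 1))] at hn
    obtain ⟨y, hy1, hy2⟩ := hn
    rw [Set.mem_singleton_iff] at hy1
    subst hy1
    have := hy2.1
    norm_num at this
end

section
/- Let X = [0,∞), Y = ℝ, Φ(x) = (-∞, x], and u(x,y) = |min{x, y+1}| + x. Then u is continuous on X × Y and inf-compact on Gr_X(Φ), v(x) = x, Φ*(0) = [-1,0] and Φ*(x) = {-1} for x > 0, and Φ* is not lower semi-continuous at 0. -/
/-- Example: X = [0,∞), Y = ℝ, Φ(x) = (-∞, x], u(x,y) = |min{x, y+1}| + x.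
    u is continuous and inf-compact on Gr_X(Φ), v(x) = x, Φ*(0) = [-1,0],
    Φ*(x) = {-1} for x > 0, and Φ* is not lower semicontinuous at 0. -/
theorem example_infCompact_argmin_not_lsc :
    let X := {x : ℝ // 0 ≤ x}
    let Φ : X → Set ℝ := fun x => Set.Iic x.1
    let u : X × ℝ → ℝ := fun p => |min p.1.1 (p.2 + 1)| + p.1.1
    let v : X → ℝ := fun x => sInf ((fun y => u (x, y)) '' Φ x)
    let Φs : X → Set ℝ := fun x => {y ∈ Φ x | u (x, y) = v x}
    Continuous u ∧
    (∀ lam : ℝ, IsCompact {p : X × ℝ | p.2 ∈ Φ p.1 ∧ u p ≤ lam}) ∧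
    (∀ x : X, v x = x.1) ∧
    (∀ x : X, x.1 = 0 → Φs x = Set.Icc (-1 : ℝ) 0) ∧
    (∀ x : X, 0 < x.1 → Φs x = {(-1 : ℝ)}) ∧
    ¬ (∀ G : Set ℝ, IsOpen G → (Φs ⟨0, le_refl 0⟩ ∩ G).Nonempty →
        ∀ᶠ z in nhds (⟨0, le_refl 0⟩ : X), (Φs z ∩ G).Nonempty) := by
  intro X Φ u v Φs
  have hu : Continuous u := by
    apply Continuous.add
    · exact ((continuous_subtype_val.comp continuous_fst).min
        (continuous_snd.add continuous_const)).abs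
    · exact continuous_subtype_val.comp continuous_fst
  have hv : ∀ x : X, v x = x.1 := by
    intro x
    have hmem : x.1 ∈ (fun y => u (x, y)) '' Φ x := by
      refine ⟨-1, by simpa [Φ] using le_trans (by norm_num) x.2, ?_⟩
      simp [u, min_eq_right x.2]
    have hlb : ∀ b ∈ (fun y => u (x, y)) '' Φ x, x.1 ≤ b := by
      rintro b ⟨y, hy, rfl⟩
      exact le_add_of_nonneg_left (abs_nonneg _)
    exact le_antisymm (csInf_le ⟨x.1, hlb⟩ hmem) (le_csInf ⟨_, hmem⟩ hlb)
  have hcomp : ∀ lam : ℝ, IsCompact {p : X × ℝ | p.2 ∈ Φ p.1 ∧ u p ≤ lam} := by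
    intro lam
    set S : Set (X × ℝ) := {p : X × ℝ | p.2 ∈ Φ p.1 ∧ u p ≤ lam} with hS
    have hSclosed : IsClosed S := by
      apply IsClosed.inter
      · exact isClosed_le continuous_snd (continuous_subtype_val.comp continuous_fst)
      · exact isClosed_le hu continuous_const
    have hK : IsCompact ((Subtype.val ⁻¹' Set.Icc (0:ℝ) lam : Set X) ×ˢ
        Set.Icc (-1 - lam) lam) := by
      refine IsCompact.prod ?_ isCompact_Icc
      exact ((isClosed_Ici (a := (0:ℝ))).isClosedEmbedding_subtypeVal).isCompact_preimage
        isCompact_Icc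
    refine hK.of_isClosed_subset hSclosed ?_
    rintro ⟨x, y⟩ ⟨h1, h2⟩
    simp only [Φ, u, Set.mem_Iic, Set.mem_setOf_eq] at h1 h2
    have habs : (0:ℝ) ≤ |min x.1 (y + 1)| := abs_nonneg _
    have hxlam : x.1 ≤ lam := by linarith
    have hlam0 : (0:ℝ) ≤ lam := le_trans x.2 hxlam
    constructor
    · exact ⟨x.2, hxlam⟩
    · refine ⟨?_, le_trans h1 hxlam⟩
      by_cases hy : 0 ≤ y + 1
      · linarith
      · have hmin : min x.1 (y + 1) = y + 1 :=
          min_eq_right (le_trans (le_of_not_ge hy) x.2)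
        rw [hmin, abs_of_neg (lt_of_not_ge hy)] at h2
        linarith [x.2]
  have h0 : ∀ x : X, x.1 = 0 → Φs x = Set.Icc (-1 : ℝ) 0 := by
    intro x hx
    ext y
    simp only [Φs, Φ, u, hv, Set.mem_setOf_eq, Set.mem_Iic, hx, Set.mem_Icc]
    constructor
    · rintro ⟨hy, he⟩
      refine ⟨?_, hy⟩
      have h1 : |min (0:ℝ) (y + 1)| = 0 := by linarith
      have h2 : min (0:ℝ) (y + 1) = 0 := abs_eq_zero.mp h1
      have := min_eq_left_iff.mp h2
      linarith
    · rintro ⟨h1, h2⟩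
      refine ⟨h2, ?_⟩
      rw [min_eq_left (by linarith)]
      simp
  have hpos : ∀ x : X, 0 < x.1 → Φs x = {(-1 : ℝ)} := by
    intro x hx
    ext y
    simp only [Φs, Φ, u, hv, Set.mem_setOf_eq, Set.mem_Iic, Set.mem_singleton_iff]
    constructor
    · rintro ⟨hy, he⟩
      have h1 : |min x.1 (y + 1)| = 0 := by linarith
      have h2 : min x.1 (y + 1) = 0 := abs_eq_zero.mp h1
      rcases min_cases x.1 (y + 1) with ⟨h3, _⟩ | ⟨h3, _⟩
      · rw [h3] at h2; linarith
      · rw [h3] at h2; linarith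
    · rintro rfl
      refine ⟨by linarith, ?_⟩
      rw [show (-1:ℝ) + 1 = 0 by ring, min_eq_right x.2]
      simp
  refine ⟨hu, hcomp, hv, h0, hpos, ?_⟩
  intro H
  have hmem0 : (0:ℝ) ∈ Φs ⟨0, le_refl 0⟩ ∩ Set.Ioi (-(1:ℝ)/2) := by
    constructor
    · rw [h0 ⟨0, le_refl 0⟩ rfl]
      exact ⟨by norm_num, le_refl 0⟩
    · simp only [Set.mem_Ioi]; norm_num
  have hG := H (Set.Ioi (-(1:ℝ)/2)) isOpen_Ioi ⟨0, hmem0⟩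
  have hseq : Filter.Tendsto (fun n : ℕ => (⟨1 / (n + 1), by positivity⟩ : X))
      Filter.atTop (nhds (⟨0, le_refl 0⟩ : X)) := by
    rw [tendsto_subtype_rng]
    exact tendsto_one_div_add_atTop_nhds_zero_nat
  obtain ⟨n, y, hy1, hy2⟩ := (hseq.eventually hG).exists
  have hzpos : (0:ℝ) < 1 / ((n:ℝ) + 1) := by positivity
  rw [hpos _ hzpos] at hy1
  rw [Set.mem_singleton_iff] at hy1
  subst hy1
  simp only [Set.mem_Ioi] at hy2
  linarith
end

section
/- Let X = [0,1], Y = [-1,1], Φ(x) = Y, and define u(0,y) = 0 for y ∈ [-1,0], u(0,y) = y for y ∈ (0,1], u(x,y) = 1 - y for x ∈ (0,1], y ∈ [-1,0], and u(x,y) = 1 for x ∈ (0,1], y ∈ (0,1]. Then: u is inf-compact on Gr_X(Φ) but not upper semi-continuous on Gr_X(Φ); v(0) = 0 and v(x) = 1 for x ∈ (0,1]; Φ*(0) = [-1,0] and Φ*(x) = [0,1] for x ∈ (0,1]; Φ* is neither lower nor upper semi-continuous, and the graph of Φ* is not closed. -/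
open Filter Topology

namespace ArgminPathologyAux

abbrev Xt := {x : ℝ // x ∈ Set.Icc (0 : ℝ) 1}
abbrev Yt := {y : ℝ // y ∈ Set.Icc (-1 : ℝ) 1}

noncomputable def uu : Xt × Yt → ℝ := fun p =>
  if p.1.1 = 0 then (if p.2.1 ≤ 0 then 0 else p.2.1)
  else (if p.2.1 ≤ 0 then 1 - p.2.1 else 1)

noncomputable def vv : Xt → ℝ := fun x => sInf ((fun y => uu (x, y)) '' Set.univ)

noncomputable instance : CompactSpace Xt := isCompact_iff_compactSpace.mp isCompact_Icc
noncomputable instance : CompactSpace Yt := isCompact_iff_compactSpace.mp isCompact_Icc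

def x0 : Xt := ⟨0, by norm_num⟩
def y0 : Yt := ⟨0, by norm_num⟩
def y1 : Yt := ⟨1, by norm_num⟩
def yneg : Yt := ⟨-1, by norm_num⟩

noncomputable def xseq (n : ℕ) : Xt :=
  ⟨1/(n+1), by
    constructor
    · positivity
    · rw [div_le_one (by positivity)]
      have : (0:ℝ) ≤ n := Nat.cast_nonneg n
      linarith⟩

lemma xseq_pos (n : ℕ) : 0 < (xseq n).1 := by
  simp only [xseq]; positivity

lemma xseq_tendsto : Tendsto xseq atTop (nhds x0) := by
  rw [tendsto_subtype_rng]
  exact tendsto_one_div_add_atTop_nhds_zero_nat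

lemma v_zero (x : Xt) (hx : x.1 = 0) : vv x = 0 := by
  apply IsLeast.csInf_eq
  constructor
  · exact ⟨y0, Set.mem_univ _, by simp [uu, hx, y0]⟩
  · rintro r ⟨y, -, rfl⟩
    simp only [uu, hx, if_true]
    split_ifs with h <;> linarith [y.2.1]

lemma v_pos (x : Xt) (hx : 0 < x.1) : vv x = 1 := by
  apply IsLeast.csInf_eq
  constructor
  · exact ⟨y0, Set.mem_univ _, by simp [uu, hx.ne', y0]⟩
  · rintro r ⟨y, -, rfl⟩
    simp only [uu, hx.ne', if_false]
    split_ifs with h <;> linarith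

lemma phi_zero (x : Xt) (hx : x.1 = 0) :
    {y : Yt | uu (x, y) = vv x} = {y : Yt | y.1 ∈ Set.Icc (-1 : ℝ) 0} := by
  ext y
  simp only [Set.mem_setOf_eq, v_zero x hx, uu, hx, if_true, Set.mem_Icc]
  split_ifs with h
  · simp [y.2.1, h]
  · constructor
    · intro h'; linarith
    · intro h'; linarith [h'.2]

lemma phi_pos (x : Xt) (hx : 0 < x.1) :
    {y : Yt | uu (x, y) = vv x} = {y : Yt | y.1 ∈ Set.Icc (0 : ℝ) 1} := by
  ext y
  simp only [Set.mem_setOf_eq, v_pos x hx, uu, hx.ne', if_false, Set.mem_Icc]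
  split_ifs with h
  · constructor
    · intro h'; constructor <;> linarith [y.2.2]
    · intro h'; linarith [h'.1]
  · push_neg at h
    simp only [Set.mem_Icc]
    exact ⟨fun _ => ⟨h.le, y.2.2⟩, fun _ => trivial⟩

lemma levelset_compact (lam : ℝ) : IsCompact {p : Xt × Yt | uu p ≤ lam} := by
  have hc1 : Continuous (fun p : Xt × Yt => p.1.1) :=
    continuous_subtype_val.comp continuous_fst
  have hc2 : Continuous (fun p : Xt × Yt => p.2.1) :=
    continuous_subtype_val.comp continuous_snd
  apply IsClosed.isCompact
  rcases lt_or_ge lam 0 with h0 | h0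
  · convert isClosed_empty
    ext p
    simp only [Set.mem_setOf_eq, Set.mem_empty_iff_false, iff_false, not_le, uu]
    split_ifs <;> linarith [p.2.2.1]
  rcases lt_or_ge lam 1 with h1 | h1
  · have : {p : Xt × Yt | uu p ≤ lam} = {p | p.1.1 = 0} ∩ {p | p.2.1 ≤ lam} := by
      ext p
      simp only [Set.mem_setOf_eq, Set.mem_inter_iff, uu]
      split_ifs with hx hy hy
      · simp [hx]; constructor <;> intro <;> linarith
      · simp [hx]
      · constructor
        · intro h; linarith
        · rintro ⟨h, -⟩; exact absurd h hx
      · constructor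
        · intro h; linarith
        · rintro ⟨h, -⟩; exact absurd h hx
    rw [this]
    exact (isClosed_eq hc1 continuous_const).inter (isClosed_le hc2 continuous_const)
  · have : {p : Xt × Yt | uu p ≤ lam} = {p | p.1.1 = 0} ∪ {p | 1 - lam ≤ p.2.1} := by
      ext p
      simp only [Set.mem_setOf_eq, Set.mem_union, uu]
      split_ifs with hx hy hy
      · simp [hx]; linarith
      · simp [hx]; linarith [p.2.2.2]
      · simp [hx]; constructor <;> intro <;> linarith
      · push_neg at hy
        simp [hx]
        constructor <;> intro <;> linarith
    rw [this]
    exact (isClosed_eq hc1 continuous_const).union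
      (isClosed_le continuous_const hc2)

end ArgminPathologyAux

open ArgminPathologyAux in

/-- Example: X = [0,1], Y = [-1,1], Φ(x) = Y, with u defined piecewise.
    u is inf-compact but not upper semicontinuous on Gr_X(Φ) = X × Y;
    v(0) = 0, v(x) = 1 for x > 0; Φ*(0) = [-1,0], Φ*(x) = [0,1] for x > 0;
    Φ* is neither lower nor upper semicontinuous and its graph is not closed. -/
theorem example_argmin_pathology :
    let X := {x : ℝ // x ∈ Set.Icc (0 : ℝ) 1}
    let Y := {y : ℝ // y ∈ Set.Icc (-1 : ℝ) 1}
    let u : X × Y → ℝ := fun p =>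
      if p.1.1 = 0 then (if p.2.1 ≤ 0 then 0 else p.2.1)
      else (if p.2.1 ≤ 0 then 1 - p.2.1 else 1)
    let v : X → ℝ := fun x => sInf ((fun y => u (x, y)) '' Set.univ)
    let Φs : X → Set Y := fun x => {y : Y | u (x, y) = v x}
    -- u inf-compact on Gr_X(Φ) = X × Y
    (∀ lam : ℝ, IsCompact {p : X × Y | u p ≤ lam}) ∧
    -- u not upper semicontinuous
    ¬ UpperSemicontinuous u ∧
    -- values of v
    (∀ x : X, x.1 = 0 → v x = 0) ∧ (∀ x : X, 0 < x.1 → v x = 1) ∧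
    -- values of Φ*
    (∀ x : X, x.1 = 0 → Φs x = {y : Y | y.1 ∈ Set.Icc (-1 : ℝ) 0}) ∧
    (∀ x : X, 0 < x.1 → Φs x = {y : Y | y.1 ∈ Set.Icc (0 : ℝ) 1}) ∧
    -- Φ* not lower semicontinuous
    ¬ (∀ x : X, ∀ G : Set Y, IsOpen G → (Φs x ∩ G).Nonempty →
        ∀ᶠ z in nhds x, (Φs z ∩ G).Nonempty) ∧
    -- Φ* not upper semicontinuous
    ¬ (∀ x : X, ∀ G : Set Y, IsOpen G → Φs x ⊆ G →
        ∀ᶠ z in nhds x, Φs z ⊆ G) ∧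
    -- graph of Φ* not closed
    ¬ IsClosed {p : X × Y | p.2 ∈ Φs p.1} := by
  intro X Y u v Φs
  have hu : u = uu := rfl
  have hv : v = vv := rfl
  have hΦ : ∀ x : X, Φs x = {y : Yt | uu (x, y) = vv x} := fun _ => rfl
  refine ⟨?_, ?_, ?_, ?_, ?_, ?_, ?_, ?_, ?_⟩
  · -- inf-compact
    intro lam
    exact levelset_compact lam
  · -- not usc
    intro h
    have hlt : u (x0, y0) < 1/2 := by
      show uu (x0, y0) < 1/2
      norm_num [uu, x0, y0]
    have h0 := h (x0, y0) (1/2) hlt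
    have htd : Tendsto (fun n => (xseq n, y0)) atTop (nhds (x0, y0)) :=
      xseq_tendsto.prodMk_nhds tendsto_const_nhds
    have := (htd.eventually h0).exists
    obtain ⟨n, hn⟩ := this
    have : uu (xseq n, y0) = 1 := by
      simp [uu, (xseq_pos n).ne', y0]
    rw [show u (xseq n, y0) = uu (xseq n, y0) from rfl, this] at hn
    norm_num at hn
  · exact v_zero
  · exact v_pos
  · intro x hx; rw [hΦ x]; exact phi_zero x hx
  · intro x hx; rw [hΦ x]; exact phi_pos x hx
  · -- not lsc of Φ*
    intro h
    have hG : IsOpen {y : Yt | y.1 < 0} :=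
      isOpen_Iio.preimage continuous_subtype_val
    have hne : (Φs x0 ∩ {y : Yt | y.1 < 0}).Nonempty := by
      refine ⟨yneg, ?_, by show (-1:ℝ) < 0; norm_num⟩
      rw [hΦ x0, phi_zero x0 rfl]
      exact show (-1:ℝ) ≤ -1 ∧ (-1:ℝ) ≤ 0 by norm_num
    have h0 := h x0 _ hG hne
    obtain ⟨n, hn⟩ := (xseq_tendsto.eventually h0).exists
    obtain ⟨y, hy1, hy2⟩ := hn
    rw [hΦ _, phi_pos _ (xseq_pos n)] at hy1
    simp only [Set.mem_setOf_eq, Set.mem_Icc] at hy1 hy2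
    exact absurd (show (0:ℝ) ≤ y.1 from hy1.1) (not_le.mpr (show y.1 < 0 from hy2))
  · -- not usc of Φ*
    intro h
    have hG : IsOpen {y : Yt | y.1 < 1/2} :=
      isOpen_Iio.preimage continuous_subtype_val
    have hsub : Φs x0 ⊆ {y : Yt | y.1 < 1/2} := by
      rw [hΦ x0, phi_zero x0 rfl]
      intro y hy
      simp only [Set.mem_setOf_eq, Set.mem_Icc] at hy ⊢
      exact show y.1 < 1/2 by linarith [hy.2]
    have h0 := h x0 _ hG hsub
    obtain ⟨n, hn⟩ := (xseq_tendsto.eventually h0).exists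
    have : y1 ∈ Φs (xseq n) := by
      rw [hΦ _, phi_pos _ (xseq_pos n)]
      norm_num [y1]
    have := hn this
    exact absurd (show (1:ℝ) < 1/2 from this) (by norm_num)
  · -- graph not closed
    intro h
    have htd : Tendsto (fun n => (xseq n, y1)) atTop (nhds (x0, y1)) :=
      xseq_tendsto.prodMk_nhds tendsto_const_nhds
    have hmem : ∀ n, (xseq n, y1) ∈ {p : X × Y | p.2 ∈ Φs p.1} := by
      intro n
      show y1 ∈ Φs (xseq n)
      rw [hΦ _, phi_pos _ (xseq_pos n)]
      norm_num [y1]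
    have hlim : (x0, y1) ∈ {p : X × Y | p.2 ∈ Φs p.1} :=
      h.mem_of_tendsto htd (Filter.Eventually.of_forall hmem)
    have : y1 ∈ Φs x0 := hlim
    rw [hΦ x0, phi_zero x0 rfl] at this
    norm_num [y1] at this
end

section
/- Let X and Y be Hausdorff topological spaces, Φ : X → K(Y) an upper semi-continuous compact-valued multifunction, and u : X × Y → ℝ∪{±∞} lower semi-continuous. Then v(x) = inf_{y ∈ Φ(x)} u(x,y) is lower semi-continuous on X (Berge's theorem). -/
/-- Berge's theorem: if Φ is an upper semicontinuous compact-valued multifunction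
    and u is lower semicontinuous, then v(x) = inf_{y ∈ Φ x} u (x, y) is lower
    semicontinuous. -/
theorem berge_theorem {X Y : Type*}
    [TopologicalSpace X] [TopologicalSpace Y] [T2Space X] [T2Space Y]
    (Φ : X → Set Y) (hne : ∀ x, (Φ x).Nonempty) (hcomp : ∀ x, IsCompact (Φ x))
    (husc : ∀ x : X, ∀ G : Set Y, IsOpen G → Φ x ⊆ G → ∀ᶠ z in nhds x, Φ z ⊆ G)
    (u : X × Y → EReal) (hlsc : LowerSemicontinuous u) :
    LowerSemicontinuous (fun x => ⨅ y ∈ Φ x, u (x, y)) := by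
  intro x lam hlam
  simp only at hlam
  obtain ⟨lam', hlam1, hlam2⟩ := exists_between hlam
  -- for each y ∈ Φ x, u (x, y) > lam', get product neighborhoods
  have key : ∀ y ∈ Φ x, ∃ U ∈ nhds x, ∃ V ∈ nhds y,
      ∀ p ∈ U ×ˢ V, lam' < u p := by
    intro y hy
    have hu : lam' < u (x, y) := lt_of_lt_of_le hlam2 (iInf₂_le y hy)
    have := hlsc (x, y) lam' hu
    rw [Filter.eventually_iff, mem_nhds_prod_iff] at this
    obtain ⟨U, hU, V, hV, hUV⟩ := this
    exact ⟨U, hU, V, hV, fun p hp => hUV hp⟩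
  choose! U hU V hV hUV using key
  -- cover Φ x by interiors of V y
  obtain ⟨t, ht_sub, ht_cov⟩ := (hcomp x).elim_nhds_subcover
    (fun y => interior (V y)) (fun y hy => interior_mem_nhds.mpr (hV y hy))
  have hGopen : IsOpen (⋃ y ∈ t, interior (V y)) :=
    isOpen_biUnion fun y _ => isOpen_interior
  have h1 := husc x _ hGopen ht_cov
  have h2 : ∀ᶠ z in nhds x, z ∈ ⋂ y ∈ t, U y := by
    apply Filter.eventually_of_mem ((Filter.biInter_finset_mem t).mpr
      (fun y hy => hU y (ht_sub y hy)))
    exact fun z hz => hz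
  filter_upwards [h1, h2] with z hz1 hz2
  show lam < ⨅ y ∈ Φ z, u (z, y)
  refine lt_of_lt_of_le hlam1 (le_iInf₂ fun y hy => ?_)
  obtain ⟨s, hs, hys⟩ := Set.mem_iUnion₂.mp (hz1 hy)
  have hzU : z ∈ U s := Set.mem_iInter₂.mp hz2 s hs
  exact le_of_lt (hUV s (ht_sub s hs) (z, y) ⟨hzU, interior_subset hys⟩)
end
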